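/- arXiv:0909.2265 — 3 statements merged into one kernel-verified Lean document; each statement's English description precedes it below -/
import Mathlib

section
/- Let H : ℝ → ℝ be continuous and let a : I → ℝ be a C² function on an open interval I containing 0 with a'(s) > 0 for all s ∈ I, satisfying a''(s) - a'(s)(1 + a'(s)²) H(s) = 0 on I. Then for all s ∈ I, a'(s)²/(1 + a'(s)²) = h(s), where h(s) = (a'(0)²/(1 + a'(0)²)) · exp(2 ∫₀ˢ H(τ) dτ). -/
/-!
The quantity `g = a'² / (1 + a'²)` has derivative `2 a' a'' / (1 + a'²)²`, which the equation
`a'' = a' (1 + a'²) H` turns into `2 H g`. So `g` solves the scalar linear equation `g' = 2 H g`,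
whose solutions are `g(0) · exp (2 ∫₀ˢ H)`: multiplying by `exp (-2 ∫₀ˢ H)` gives a function with
zero derivative, hence constant on the interval.
-/

open Real

theorem HasDerivAt.sq_div_one_add_sq {f : ℝ → ℝ} {f' x : ℝ} (hf : HasDerivAt f f' x) :
    HasDerivAt (fun t => f t ^ 2 / (1 + f t ^ 2)) (2 * f x * f' / (1 + f x ^ 2) ^ 2) x := by
  have hsq : HasDerivAt (fun t => f t ^ 2) (2 * f x * f') x := by
    simpa [mul_comm, mul_left_comm] using hf.fun_pow 2
  have hden : (1 + f x ^ 2) ≠ 0 := by positivity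
  refine (hsq.fun_div (hsq.const_add 1) hden).congr_deriv ?_
  congr 1
  ring

theorem Convex.eq_mul_exp_integral_of_hasDerivAt {s : Set ℝ} (hs : Convex ℝ s) {c g : ℝ → ℝ}
    (hc : Continuous c) {x₀ : ℝ} (hx₀ : x₀ ∈ s) (hg : ∀ x ∈ s, HasDerivAt g (c x * g x) x) :
    ∀ x ∈ s, g x = g x₀ * exp (∫ t in x₀..x, c t) := by
  set C : ℝ → ℝ := fun x => ∫ t in x₀..x, c t
  have hC : ∀ x, HasDerivAt C (c x) x := fun x => (hc.integral_hasStrictDerivAt x₀ x).hasDerivAt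
  have hφ : ∀ x ∈ s, HasDerivWithinAt (fun x => g x * exp (-C x)) 0 s x := by
    intro x hx
    refine ((hg x hx).fun_mul (hC x).neg.exp).hasDerivWithinAt.congr_deriv ?_
    ring
  intro x hx
  have hconst : g x * exp (-C x) = g x₀ * exp (-C x₀) := by
    simpa [sub_eq_zero] using
      hs.norm_image_sub_le_of_norm_hasDerivWithin_le hφ (fun _ _ => norm_zero.le) hx₀ hx
  have hCx₀ : C x₀ = 0 := intervalIntegral.integral_same
  rw [hCx₀, neg_zero, exp_zero, mul_one] at hconst
  rw [← hconst, mul_assoc, ← exp_add, neg_add_cancel, exp_zero, mul_one]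

theorem stmt1_general (H : ℝ → ℝ) (hH : Continuous H) (I : Set ℝ)
    (hIconn : I.OrdConnected) (h0 : (0 : ℝ) ∈ I)
    (a' a'' : ℝ → ℝ)
    (ha'' : ∀ s ∈ I, HasDerivAt a' (a'' s) s)
    (hode : ∀ s ∈ I, a'' s - a' s * (1 + (a' s) ^ 2) * H s = 0) :
    ∀ s ∈ I, (a' s) ^ 2 / (1 + (a' s) ^ 2) =
      (a' 0) ^ 2 / (1 + (a' 0) ^ 2) * Real.exp (2 * ∫ τ in (0 : ℝ)..s, H τ) := by
  have hg : ∀ s ∈ I, HasDerivAt (fun t => a' t ^ 2 / (1 + a' t ^ 2))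
      (2 * H s * (a' s ^ 2 / (1 + a' s ^ 2))) s := by
    intro s hs
    convert (ha'' s hs).sq_div_one_add_sq using 1
    have hden : (1 + a' s ^ 2) ≠ 0 := by positivity
    rw [sub_eq_zero.mp (hode s hs)]
    field_simp
  intro s hs
  rw [← intervalIntegral.integral_const_mul]
  exact hIconn.convex.eq_mul_exp_integral_of_hasDerivAt (continuous_const.mul hH) h0 hg s hs

theorem stmt1 (H : ℝ → ℝ) (hH : Continuous H) (I : Set ℝ) (hIopen : IsOpen I)
    (hIconn : I.OrdConnected) (h0 : (0 : ℝ) ∈ I)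
    (a a' a'' : ℝ → ℝ)
    (ha' : ∀ s ∈ I, HasDerivAt a (a' s) s)
    (ha'' : ∀ s ∈ I, HasDerivAt a' (a'' s) s)
    (ha''cont : ContinuousOn a'' I)
    (hpos : ∀ s ∈ I, 0 < a' s)
    (hode : ∀ s ∈ I, a'' s - a' s * (1 + (a' s) ^ 2) * H s = 0) :
    ∀ s ∈ I, (a' s) ^ 2 / (1 + (a' s) ^ 2) =
      (a' 0) ^ 2 / (1 + (a' 0) ^ 2) * Real.exp (2 * ∫ τ in (0 : ℝ)..s, H τ) :=
  stmt1_general H hH I hIconn h0 a' a'' ha'' hode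
end

section
/- Let H : ℝ → ℝ be continuous, let h₀ ∈ ℝ with 0 < h₀ < 1, and define h(t) = h₀ · exp(2 ∫₀ᵗ H(τ) dτ). Suppose I is an open interval containing 0 on which 0 < h(t) < 1 for all t ∈ I, and define a(s) = a₀ + ∫₀ˢ √(h(t)/(1 - h(t))) dt. Then a is C² on I and satisfies a''(s) - a'(s)(1 + a'(s)²) H(s) = 0 for all s ∈ I. -/
/-!
By the fundamental theorem of calculus `h' = 2 H h` and `a' = f := √(h / (1 - h))` on `I`.
Since `1 + f² = 1 / (1 - h)`, the chain rule gives `f' = H f (1 + f²)`, which is continuous on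
`I`; so `a'` is `C¹` and `a'' = a' (1 + a'²) H`.
-/

open Real Filter Topology intervalIntegral

theorem ContinuousOn.hasDerivAt_integral_of_ordConnected {E : Type*} [NormedAddCommGroup E]
    [NormedSpace ℝ E] [CompleteSpace E] {f : ℝ → E} {I : Set ℝ}
    (hf : ContinuousOn f I) (hI : IsOpen I) (hIc : I.OrdConnected) {a s : ℝ} (ha : a ∈ I)
    (hs : s ∈ I) : HasDerivAt (fun u => ∫ t in a..u, f t) (f s) s :=
  integral_hasDerivAt_right ((hf.mono (hIc.uIcc_subset ha hs)).intervalIntegrable)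
    (hf.stronglyMeasurableAtFilter hI s hs) (hf.continuousAt (hI.mem_nhds hs))

theorem contDiffOn_succ_of_hasDerivAt {𝕜 F : Type*} [NontriviallyNormedField 𝕜]
    [NormedAddCommGroup F] [NormedSpace 𝕜 F] {f f' : 𝕜 → F} {I : Set 𝕜} {n : ℕ} (hI : IsOpen I)
    (hf : ∀ x ∈ I, HasDerivAt f (f' x) x) (hf' : ContDiffOn 𝕜 n f' I) :
    ContDiffOn 𝕜 (n + 1) f I := by
  refine (contDiffOn_succ_iff_deriv_of_isOpen hI).2
    ⟨fun x hx => (hf x hx).differentiableAt.differentiableWithinAt, by simp, ?_⟩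
  exact hf'.congr fun x hx => (hf x hx).deriv

theorem hasDerivAt_mul_exp_integral {H : ℝ → ℝ} (hH : Continuous H) (c k t : ℝ) :
    HasDerivAt (fun u => c * exp (k * ∫ τ in (0 : ℝ)..u, H τ))
      (k * H t * (c * exp (k * ∫ τ in (0 : ℝ)..t, H τ))) t :=
  (((hH.integral_hasStrictDerivAt 0 t).hasDerivAt.const_mul k).exp.const_mul c).congr_deriv
    (by ring)

theorem HasDerivAt.sqrt_div_one_sub {h : ℝ → ℝ} {c s : ℝ} (hd : HasDerivAt h (2 * c * h s) s)
    (h0 : 0 < h s) (h1 : h s < 1) :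
    HasDerivAt (fun t => √(h t / (1 - h t)))
      (√(h s / (1 - h s)) * (1 + √(h s / (1 - h s)) ^ 2) * c) s := by
  have hne : 1 - h s ≠ 0 := by linarith
  have hq : 0 < h s / (1 - h s) := div_pos h0 (by linarith)
  refine ((hd.div ((hasDerivAt_const s 1).sub hd) hne).sqrt hq.ne').congr_deriv ?_
  simp only [Pi.div_apply, Pi.sub_apply, zero_sub]
  set f := √(h s / (1 - h s))
  have hf0 : 0 < f := sqrt_pos.2 hq
  have hf2 : f ^ 2 * (1 - h s) = h s := by
    rw [sq_sqrt hq.le]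
    field_simp
  field_simp
  linear_combination (-(c * (1 - h s) * (1 + f ^ 2)) - c * h s) * hf2

theorem stmt2_general (H : ℝ → ℝ) (hH : Continuous H) (h₀ a₀ : ℝ)
    (h : ℝ → ℝ) (hdef : ∀ t, h t = h₀ * Real.exp (2 * ∫ τ in (0 : ℝ)..t, H τ))
    (I : Set ℝ) (hIopen : IsOpen I) (hIconn : I.OrdConnected) (h0I : (0 : ℝ) ∈ I)
    (hhI : ∀ t ∈ I, 0 < h t ∧ h t < 1)
    (a : ℝ → ℝ) (hadef : ∀ s, a s = a₀ + ∫ t in (0 : ℝ)..s, Real.sqrt (h t / (1 - h t))) :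
    ContDiffOn ℝ 2 a I ∧
      ∀ s ∈ I, deriv (deriv a) s - deriv a s * (1 + (deriv a s) ^ 2) * H s = 0 := by
  have hh' : ∀ t, HasDerivAt h (2 * H t * h t) t := fun t => by
    rw [funext hdef]
    exact hasDerivAt_mul_exp_integral hH h₀ 2 t
  set f : ℝ → ℝ := fun t => √(h t / (1 - h t))
  have hf' : ∀ s ∈ I, HasDerivAt f (f s * (1 + f s ^ 2) * H s) s := fun s hs =>
    (hh' s).sqrt_div_one_sub (hhI s hs).1 (hhI s hs).2
  have hfc : ContinuousOn f I := fun s hs => (hf' s hs).continuousAt.continuousWithinAt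
  have ha' : ∀ s ∈ I, HasDerivAt a (f s) s := fun s hs => by
    rw [funext hadef]
    exact (hfc.hasDerivAt_integral_of_ordConnected hIopen hIconn h0I hs).const_add a₀
  have hfC1 : ContDiffOn ℝ 1 f I := contDiffOn_succ_of_hasDerivAt (n := 0) hIopen hf'
    (contDiffOn_zero.2 ((hfc.mul (continuousOn_const.add (hfc.pow 2))).mul hH.continuousOn))
  refine ⟨contDiffOn_succ_of_hasDerivAt (n := 1) hIopen ha' hfC1, fun s hs => ?_⟩
  have hda : deriv a =ᶠ[𝓝 s] f :=
    eventually_of_mem (hIopen.mem_nhds hs) fun x hx => (ha' x hx).deriv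
  rw [hda.deriv_eq, (hf' s hs).deriv, (ha' s hs).deriv, sub_self]

theorem stmt2 (H : ℝ → ℝ) (hH : Continuous H) (h₀ a₀ : ℝ) (hh₀ : 0 < h₀ ∧ h₀ < 1)
    (h : ℝ → ℝ) (hdef : ∀ t, h t = h₀ * Real.exp (2 * ∫ τ in (0 : ℝ)..t, H τ))
    (I : Set ℝ) (hIopen : IsOpen I) (hIconn : I.OrdConnected) (h0I : (0 : ℝ) ∈ I)
    (hhI : ∀ t ∈ I, 0 < h t ∧ h t < 1)
    (a : ℝ → ℝ) (hadef : ∀ s, a s = a₀ + ∫ t in (0 : ℝ)..s, Real.sqrt (h t / (1 - h t))) :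
    ContDiffOn ℝ 2 a I ∧
      ∀ s ∈ I, deriv (deriv a) s - deriv a s * (1 + (deriv a s) ^ 2) * H s = 0 :=
  stmt2_general H hH h₀ a₀ h hdef I hIopen hIconn h0I hhI a hadef
end

section
/- Let T be the gradient of a C² function f : ℝⁿ → ℝ, and suppose that at a point p, the directional derivative of ‖T‖² vanishes in every direction orthogonal to T(p), and T(p) ≠ 0. Then (DT)(p)(T(p)) is parallel to T(p). -/
open scoped RealInnerProductSpace

/-! The Hessian `H = D(∇f)(p)` is self-adjoint, and `D‖∇f‖²(p) X = 2⟪H X, ∇f p⟫`. Hence for `X ⊥ ∇f p`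
we get `⟪X, H (∇f p)⟫ = ⟪H X, ∇f p⟫ = 0`, so `H (∇f p)` lies in `(ℝ ∙ ∇f p)ᗮᗮ = ℝ ∙ ∇f p`. -/

section

variable {E : Type*} [NormedAddCommGroup E] [InnerProductSpace ℝ E]

theorem exists_eq_smul_of_inner_eq_zero_imp {v w : E}
    (h : ∀ x : E, ⟪x, v⟫ = 0 → ⟪x, w⟫ = 0) : ∃ c : ℝ, w = c • v := by
  have hw : w ∈ (ℝ ∙ v)ᗮᗮ := fun x hx =>
    h x (Submodule.mem_orthogonal_singleton_iff_inner_left.mp hx)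
  rw [Submodule.orthogonal_orthogonal] at hw
  obtain ⟨c, hc⟩ := Submodule.mem_span_singleton.mp hw
  exact ⟨c, hc.symm⟩

theorem fderiv_fun_norm_sq_apply {T : E → E} {p : E} (hT : DifferentiableAt ℝ T p) (x : E) :
    fderiv ℝ (fun q => ‖T q‖ ^ 2) p x = 2 * ⟪T p, fderiv ℝ T p x⟫ := by
  simp [hT.hasFDerivAt.norm_sq.fderiv]

variable [CompleteSpace E]

theorem gradient_eq_toDual_symm_comp_fderiv (f : E → ℝ) :
    gradient f = ((InnerProductSpace.toDual ℝ E).symm : StrongDual ℝ E ≃ₗᵢ[ℝ] E) ∘ fderiv ℝ f :=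
  rfl

theorem inner_fderiv_gradient_apply (f : E → ℝ) (p v w : E) :
    ⟪fderiv ℝ (gradient f) p v, w⟫ = fderiv ℝ (fderiv ℝ f) p v w := by
  rw [gradient_eq_toDual_symm_comp_fderiv, LinearIsometryEquiv.comp_fderiv]
  exact InnerProductSpace.toDual_symm_apply

theorem ContDiffAt.differentiableAt_gradient {f : E → ℝ} {p : E} (hf : ContDiffAt ℝ 2 f p) :
    DifferentiableAt ℝ (gradient f) p := by
  rw [gradient_eq_toDual_symm_comp_fderiv]
  exact LinearIsometryEquiv.differentiableAt _ |>.comp p <|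
    (hf.fderiv_right (m := 1) le_rfl).differentiableAt one_ne_zero

theorem ContDiffAt.inner_fderiv_gradient_comm {f : E → ℝ} {p : E} (hf : ContDiffAt ℝ 2 f p)
    (v w : E) : ⟪fderiv ℝ (gradient f) p v, w⟫ = ⟪v, fderiv ℝ (gradient f) p w⟫ := by
  rw [real_inner_comm _ v, inner_fderiv_gradient_apply, inner_fderiv_gradient_apply]
  exact hf.isSymmSndFDerivAt (by simp [minSmoothness_of_isRCLikeNormedField]) v w

theorem ContDiffAt.exists_fderiv_gradient_apply_eq_smul {f : E → ℝ} {p : E}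
    (hf : ContDiffAt ℝ 2 f p)
    (hperp : ∀ x : E, ⟪x, gradient f p⟫ = 0 →
      fderiv ℝ (fun q => ‖gradient f q‖ ^ 2) p x = 0) :
    ∃ c : ℝ, fderiv ℝ (gradient f) p (gradient f p) = c • gradient f p := by
  refine exists_eq_smul_of_inner_eq_zero_imp fun x hx => ?_
  have hx' := hperp x hx
  rw [fderiv_fun_norm_sq_apply hf.differentiableAt_gradient] at hx'
  rw [← hf.inner_fderiv_gradient_comm, real_inner_comm]
  linarith

end

theorem stmt10_general (n : ℕ) (f : EuclideanSpace ℝ (Fin n) → ℝ) (hf : ContDiff ℝ 2 f)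
    (T : EuclideanSpace ℝ (Fin n) → EuclideanSpace ℝ (Fin n)) (hT : T = gradient f)
    (p : EuclideanSpace ℝ (Fin n))
    (hperp : ∀ X : EuclideanSpace ℝ (Fin n), ⟪X, T p⟫ = 0 →
      fderiv ℝ (fun q => ‖T q‖ ^ 2) p X = 0) :
    ∃ c : ℝ, fderiv ℝ T p (T p) = c • T p := by
  subst hT
  exact hf.contDiffAt.exists_fderiv_gradient_apply_eq_smul hperp

theorem stmt10 (n : ℕ) (f : EuclideanSpace ℝ (Fin n) → ℝ) (hf : ContDiff ℝ 2 f)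
    (T : EuclideanSpace ℝ (Fin n) → EuclideanSpace ℝ (Fin n)) (hT : T = gradient f)
    (p : EuclideanSpace ℝ (Fin n)) (hTp : T p ≠ 0)
    (hperp : ∀ X : EuclideanSpace ℝ (Fin n), ⟪X, T p⟫ = 0 →
      fderiv ℝ (fun q => ‖T q‖ ^ 2) p X = 0) :
    ∃ c : ℝ, fderiv ℝ T p (T p) = c • T p :=
  stmt10_general n f hf T hT p hperp
end
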